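/- arXiv:1712.07564 — 7 statements merged into one kernel-verified Lean document; each statement's English description precedes it below -/
import Mathlib

section
/- If a fee sharing function f : (k, i) ↦ f_i^k with ∑_{i=1}^k f_i^k = F for all k satisfies f_i^k ≥ f_i^{k+1} + f_{i+1}^{k+1} for all 1 ≤ i ≤ k, then f_1^{k+1} + f_{k+1}^{k+1} ≥ F. -/
/-! Summing the Sybil inequalities over `i = 1, …, k` gives `F ≥ ∑ᵢ (f_i^{k+1} + f_{i+1}^{k+1})`,
and the right-hand side counts every share of the path of length `k + 1` twice, except the two
end shares `f_1^{k+1}` and `f_{k+1}^{k+1}`, which are counted once; so it equals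
`2F - f_1^{k+1} - f_{k+1}^{k+1}`. -/

open Finset

theorem Finset.sum_Icc_one_succ_eq_add_sum_shift {M : Type*} [AddCommMonoid M] (g : ℕ → M)
    (k : ℕ) : ∑ i ∈ Icc 1 (k + 1), g i = g 1 + ∑ i ∈ Icc 1 k, g (i + 1) := by
  induction k with
  | zero => simp
  | succ k ih => rw [sum_Icc_succ_top (by omega), ih, sum_Icc_succ_top (by omega), add_assoc]

theorem stmt_0_general (F : ℝ) (f : ℕ → ℕ → ℝ)
    (hsum : ∀ k : ℕ, 1 ≤ k → ∑ i ∈ Finset.Icc 1 k, f k i = F)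
    (hsybil : ∀ k : ℕ, 1 ≤ k → ∀ i : ℕ, 1 ≤ i → i ≤ k →
      f k i ≥ f (k+1) i + f (k+1) (i+1)) :
    ∀ k : ℕ, 1 ≤ k → f (k+1) 1 + f (k+1) (k+1) ≥ F := by
  intro k hk
  have pairs_le : ∑ i ∈ Icc 1 k, (f (k+1) i + f (k+1) (i+1)) ≤ F :=
    hsum k hk ▸ sum_le_sum fun i hi => hsybil k hk i (mem_Icc.1 hi).1 (mem_Icc.1 hi).2
  have drop_last := sum_Icc_succ_top (by omega : 1 ≤ k + 1) (f (k+1))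
  have drop_first := sum_Icc_one_succ_eq_add_sum_shift (f (k+1)) k
  rw [sum_add_distrib] at pairs_le
  linarith [hsum (k+1) (by omega)]

theorem stmt_0 (F : ℝ) (hF : 0 < F) (f : ℕ → ℕ → ℝ)
    (hsum : ∀ k : ℕ, 1 ≤ k → ∑ i ∈ Finset.Icc 1 k, f k i = F)
    (hsybil : ∀ k : ℕ, 1 ≤ k → ∀ i : ℕ, 1 ≤ i → i ≤ k →
      f k i ≥ f (k+1) i + f (k+1) (i+1)) :
    ∀ k : ℕ, 1 ≤ k → f (k+1) 1 + f (k+1) (k+1) ≥ F :=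
  stmt_0_general F f hsum hsybil
end

section
/- If a fee sharing function satisfies ∑_{i=1}^k f_i^k = F, f_i^k ≥ 0, and f_i^k ≥ f_i^{k+1} + f_{i+1}^{k+1} for all 1 ≤ i ≤ k, then f_i^k = 0 for all 1 < i < k; i.e., all intermediary nodes other than the first receive zero reward. -/
/-!
Summing the Sybil-proofness inequalities over the path of length `k` gives
`∑_{i ≤ k} (f_i^{k+1} + f_{i+1}^{k+1}) ≤ F = ∑_{i ≤ k+1} f_i^{k+1}`. The left side counts every
share of the path of length `k + 1` once and each interior share `f_i^{k+1}`, `1 < i < k + 1`,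
a second time, so the interior shares sum to at most `0`; being nonnegative, they vanish.
-/

open Finset

theorem Finset.sum_Icc_one_add_succ_eq {M : Type*} [AddCommMonoid M] (g : ℕ → M) {m : ℕ}
    (hm : 1 ≤ m) :
    ∑ i ∈ Icc 1 m, (g i + g (i + 1)) = ∑ i ∈ Icc 1 (m + 1), g i + ∑ i ∈ Icc 2 m, g i := by
  induction m, hm using Nat.le_induction with
  | base => simp [sum_Icc_succ_top]
  | succ m hm ih =>
    rw [sum_Icc_succ_top (by omega), ih, sum_Icc_succ_top (by omega : 1 ≤ m + 1 + 1),
      sum_Icc_succ_top (by omega : 2 ≤ m + 1)]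
    abel

theorem eq_zero_of_add_succ_le_of_sum_le {M : Type*} [AddCommMonoid M] [PartialOrder M]
    [IsOrderedCancelAddMonoid M] {a b : ℕ → M} {m : ℕ} (hm : 1 ≤ m)
    (hb : ∀ i ∈ Icc 2 m, 0 ≤ b i) (hab : ∀ i ∈ Icc 1 m, b i + b (i + 1) ≤ a i)
    (hsum : ∑ i ∈ Icc 1 m, a i ≤ ∑ i ∈ Icc 1 (m + 1), b i) :
    ∀ i ∈ Icc 2 m, b i = 0 := by
  have hinterior : ∑ i ∈ Icc 2 m, b i ≤ 0 := by
    rw [← add_le_iff_nonpos_right (∑ i ∈ Icc 1 (m + 1), b i), ← sum_Icc_one_add_succ_eq b hm]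
    exact (sum_le_sum hab).trans hsum
  exact (sum_eq_zero_iff_of_nonneg hb).mp (hinterior.antisymm (sum_nonneg hb))

theorem stmt_1_general (F : ℝ) (f : ℕ → ℕ → ℝ)
    (hsum : ∀ k : ℕ, 1 ≤ k → ∑ i ∈ Finset.Icc 1 k, f k i = F)
    (hnonneg : ∀ k i : ℕ, 0 ≤ f k i)
    (hsybil : ∀ k : ℕ, 1 ≤ k → ∀ i : ℕ, 1 ≤ i → i ≤ k →
      f k i ≥ f (k+1) i + f (k+1) (i+1)) :
    ∀ k i : ℕ, 1 < i → i < k → f k i = 0 := by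
  intro k i hi hik
  obtain ⟨m, rfl⟩ : ∃ m, k = m + 1 := ⟨k - 1, by omega⟩
  have hm : 1 ≤ m := by omega
  refine eq_zero_of_add_succ_le_of_sum_le (a := f m) hm (fun j _ ↦ hnonneg _ j) ?_ ?_ i
    (mem_Icc.mpr ⟨hi, by omega⟩)
  · intro j hj
    exact hsybil m hm j (mem_Icc.mp hj).1 (mem_Icc.mp hj).2
  · rw [hsum m hm, hsum (m + 1) (by omega)]

theorem stmt_1 (F : ℝ) (hF : 0 < F) (f : ℕ → ℕ → ℝ)
    (hsum : ∀ k : ℕ, 1 ≤ k → ∑ i ∈ Finset.Icc 1 k, f k i = F)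
    (hnonneg : ∀ k i : ℕ, 0 ≤ f k i)
    (hsybil : ∀ k : ℕ, 1 ≤ k → ∀ i : ℕ, 1 ≤ i → i ≤ k →
      f k i ≥ f (k+1) i + f (k+1) (i+1)) :
    ∀ k i : ℕ, 1 < i → i < k → f k i = 0 :=
  stmt_1_general F f hsum hnonneg hsybil
end

section
/- Let a, b, p > 0 and s, c, d, m₁, m₂ ≥ 0 with s ≥ p and m₁ > 0. If b/a > p/(s + c + d), then for every α ∈ [0,1]: (a·p + b·m₁ + α·b·c)/(s + m₁ + c + d) > (a·p)/(s + c + d). -/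
theorem stmt_4 (a b p s c d m₁ m₂ : ℝ) (ha : 0 < a) (hb : 0 < b) (hp : 0 < p)
    (hs : 0 ≤ s) (hc : 0 ≤ c) (hd : 0 ≤ d) (hm₁ : 0 < m₁) (hm₂ : 0 ≤ m₂)
    (hsp : p ≤ s)
    (h : b / a > p / (s + c + d)) :
    ∀ α ∈ Set.Icc (0:ℝ) 1,
      (a * p + b * m₁ + α * b * c) / (s + m₁ + c + d) > a * p / (s + c + d) := by
  intro α hα
  obtain ⟨hα0, hα1⟩ := hα
  have hD : 0 < s + c + d := by linarith
  have hD2 : 0 < s + m₁ + c + d := by linarith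
  have key : b * (s + c + d) > a * p := by
    have := (div_lt_div_iff₀ hD ha).mp h
    linarith
  rw [gt_iff_lt, div_lt_div_iff₀ hD hD2]
  have h1 : a * p * m₁ < b * m₁ * (s + c + d) := by
    have := mul_lt_mul_of_pos_right key hm₁
    nlinarith
  have h2 : 0 ≤ α * b * c * (s + c + d) := by positivity
  nlinarith
end

section
/- Fix F > 0 and C ∈ (0,1). Define f_i^k = F·C·(1−C)^{i−1} for 1 ≤ i < k and f_k^k = F·(1−C)^{k−1}. Then for all k ≥ 1 and s ≥ 1: f_k^k ≥ ∑_{i=0}^{s} f_{k+i}^{k+s}. (Sybil-proofness: a node at the end of the path does not gain by inserting s Sybil nodes before the leader position.) -/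
/-!
The inequality is in fact an equality. On the path of length `k + s`, the shares of positions
`k, …, k + s` all carry the factor `F (1 - C)^(k - 1)`, and what remains,
`C ∑_{i<s} (1 - C)^i + (1 - C)^s`, equals `1` by the geometric sum formula.
-/

open Finset

theorem mul_geom_sum_one_sub_add_pow {R : Type*} [CommRing R] (C : R) (s : ℕ) :
    C * ∑ i ∈ range s, (1 - C) ^ i + (1 - C) ^ s = 1 := by
  have h := mul_neg_geom_sum (1 - C) s
  rw [sub_sub_cancel] at h
  rw [h, sub_add_cancel]

theorem stmt_6_general (F C : ℝ)
    (f : ℕ → ℕ → ℝ)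
    (hf_mid : ∀ k i : ℕ, 1 ≤ i → i < k → f k i = F * C * (1 - C) ^ (i - 1))
    (hf_lead : ∀ k : ℕ, 1 ≤ k → f k k = F * (1 - C) ^ (k - 1)) :
    ∀ k : ℕ, 1 ≤ k → ∀ s : ℕ, 1 ≤ s →
      f k k ≥ ∑ i ∈ Finset.range (s + 1), f (k + s) (k + i) := by
  intro k hk s _
  obtain ⟨m, rfl⟩ : ∃ m, k = m + 1 := ⟨k - 1, by omega⟩
  have h_mid : ∀ i ∈ range s, f (m + 1 + s) (m + 1 + i) = F * C * (1 - C) ^ m * (1 - C) ^ i := by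
    intro i hi
    rw [hf_mid _ _ (by omega) (by simp at hi; omega), mul_assoc _ ((1 - C) ^ m), ← pow_add]
    congr 2
    omega
  have h_lead : f (m + 1 + s) (m + 1 + s) = F * (1 - C) ^ m * (1 - C) ^ s := by
    rw [hf_lead _ (by omega), mul_assoc, ← pow_add]
    congr 2
    omega
  apply le_of_eq
  calc ∑ i ∈ range (s + 1), f (m + 1 + s) (m + 1 + i)
      = F * (1 - C) ^ m * (C * ∑ i ∈ range s, (1 - C) ^ i + (1 - C) ^ s) := by
        rw [sum_range_succ, sum_congr rfl h_mid, h_lead, ← mul_sum]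
        ring
    _ = f (m + 1) (m + 1) := by
        rw [mul_geom_sum_one_sub_add_pow, mul_one, hf_lead _ le_add_self, Nat.add_sub_cancel]

theorem stmt_6 (F C : ℝ) (hF : 0 < F) (hC : C ∈ Set.Ioo (0:ℝ) 1)
    (f : ℕ → ℕ → ℝ)
    (hf_mid : ∀ k i : ℕ, 1 ≤ i → i < k → f k i = F * C * (1 - C) ^ (i - 1))
    (hf_lead : ∀ k : ℕ, 1 ≤ k → f k k = F * (1 - C) ^ (k - 1)) :
    ∀ k : ℕ, 1 ≤ k → ∀ s : ℕ, 1 ≤ s →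
      f k k ≥ ∑ i ∈ Finset.range (s + 1), f (k + s) (k + i) :=
  stmt_6_general F C f hf_mid hf_lead
end

section
/- Uniqueness: Suppose a fee sharing function f with f_i^k ≥ 0 and ∑_{i=1}^k f_i^k = F for all k ≥ 1 satisfies (i) f_k^{k+1} = C·f_k^k for all k ≥ 1 where C ∈ (0,1), (ii) f_i^k ≥ f_i^{k+1} for all i < k (permanence), and (iii) f_k^k ≥ f_k^{k+1} + f_{k+1}^{k+1} for all k ≥ 1 (Sybil-proofness). Then necessarily f_i^k = F·C·(1−C)^{i−1} for all i < k and f_k^k = F·(1−C)^{k−1}. -/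
/-! By induction on the path length `k`. Given the shares at length `k`, permanence,
condition (i) and Sybil-proofness bound each share at length `k + 1` from above by the
geometric candidate, whose shares also sum to `F`; as the actual shares sum to `F`,
every one of these bounds is attained. -/

open Finset

/-- The candidate share of node `i` on a path of length `k`, meaningful for `1 ≤ i ≤ k`. -/
noncomputable def geomShare (F C : ℝ) (k i : ℕ) : ℝ :=
  if i < k then F * C * (1 - C) ^ (i - 1) else F * (1 - C) ^ (k - 1)

lemma sum_Icc_geom (F C : ℝ) (k : ℕ) :
    ∑ i ∈ Icc 1 k, F * C * (1 - C) ^ (i - 1) = F * (1 - (1 - C) ^ k) := by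
  induction k with
  | zero => simp
  | succ n ih =>
    rw [sum_Icc_succ_top (by omega), ih, Nat.add_sub_cancel, pow_succ]
    ring

lemma geomShare_of_lt {F C : ℝ} {k i : ℕ} (h : i < k) :
    geomShare F C k i = F * C * (1 - C) ^ (i - 1) := if_pos h

lemma geomShare_self (F C : ℝ) (k : ℕ) : geomShare F C k k = F * (1 - C) ^ (k - 1) :=
  if_neg (lt_irrefl k)

lemma sum_Icc_geomShare (F C : ℝ) {k : ℕ} (hk : 1 ≤ k) :
    ∑ i ∈ Icc 1 k, geomShare F C k i = F := by
  obtain ⟨m, rfl⟩ : ∃ m, k = m + 1 := ⟨k - 1, by omega⟩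
  rw [sum_Icc_succ_top hk, geomShare_self, Nat.add_sub_cancel,
    sum_congr rfl fun i hi => geomShare_of_lt (by simp at hi; omega), sum_Icc_geom]
  ring

lemma shares_succ_eq_geomShare {F C : ℝ} {f : ℕ → ℕ → ℝ} {k : ℕ} (hk : 1 ≤ k)
    (ih : ∀ i ∈ Icc 1 k, f k i = geomShare F C k i)
    (hsum : ∑ i ∈ Icc 1 (k + 1), f (k + 1) i = F)
    (hinc : f (k + 1) k = C * f k k)
    (hperm : ∀ i, 1 ≤ i → i < k → f k i ≥ f (k + 1) i)
    (hsybil : f k k ≥ f (k + 1) k + f (k + 1) (k + 1)) :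
    ∀ i ∈ Icc 1 (k + 1), f (k + 1) i = geomShare F C (k + 1) i := by
  have hkk : f k k = F * (1 - C) ^ (k - 1) := by
    rw [ih k (mem_Icc.mpr ⟨hk, le_rfl⟩), geomShare_self]
  have hle : ∀ i ∈ Icc 1 (k + 1), f (k + 1) i ≤ geomShare F C (k + 1) i := by
    intro i hi
    obtain ⟨hi1, hik⟩ := mem_Icc.mp hi
    rcases lt_trichotomy i k with hlt | rfl | hgt
    · calc f (k + 1) i ≤ f k i := hperm i hi1 hlt
        _ = F * C * (1 - C) ^ (i - 1) := by
          rw [ih i (mem_Icc.mpr ⟨hi1, hlt.le⟩), geomShare_of_lt hlt]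
        _ = geomShare F C (k + 1) i := (geomShare_of_lt (by omega)).symm
    · rw [geomShare_of_lt (Nat.lt_succ_self _), hinc, hkk]
      exact le_of_eq (by ring)
    · obtain rfl : i = k + 1 := by omega
      have hpow : (1 - C) ^ k = (1 - C) ^ (k - 1) * (1 - C) := by
        rw [← pow_succ, Nat.sub_add_cancel hk]
      rw [hinc, hkk] at hsybil
      rw [geomShare_self, Nat.add_sub_cancel, hpow]
      linarith
  exact (sum_eq_sum_iff_of_le hle).mp (by rw [hsum, sum_Icc_geomShare F C (by omega)])

theorem stmt_9_general (F C : ℝ)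
    (f : ℕ → ℕ → ℝ)
    (hsum : ∀ k : ℕ, 1 ≤ k → ∑ i ∈ Finset.Icc 1 k, f k i = F)
    (hinc : ∀ k : ℕ, 1 ≤ k → f (k + 1) k = C * f k k)
    (hperm : ∀ k i : ℕ, 1 ≤ i → i < k → f k i ≥ f (k + 1) i)
    (hsybil : ∀ k : ℕ, 1 ≤ k → f k k ≥ f (k + 1) k + f (k + 1) (k + 1)) :
    (∀ k i : ℕ, 1 ≤ i → i < k → f k i = F * C * (1 - C) ^ (i - 1)) ∧
    (∀ k : ℕ, 1 ≤ k → f k k = F * (1 - C) ^ (k - 1)) := by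
  have key : ∀ k, 1 ≤ k → ∀ i ∈ Icc 1 k, f k i = geomShare F C k i := by
    intro k hk
    induction k, hk using Nat.le_induction with
    | base =>
      intro i hi
      obtain rfl : i = 1 := by simpa using hi
      simpa [geomShare_self] using hsum 1 le_rfl
    | succ k hk ih =>
      exact shares_succ_eq_geomShare hk ih (hsum (k + 1) (by omega)) (hinc k hk)
        (hperm k) (hsybil k hk)
  refine ⟨fun k i hi hik => ?_, fun k hk => ?_⟩
  · rw [key k (by omega) i (mem_Icc.mpr ⟨hi, hik.le⟩), geomShare_of_lt hik]
  · rw [key k hk k (mem_Icc.mpr ⟨hk, le_rfl⟩), geomShare_self]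

theorem stmt_9 (F C : ℝ) (hF : 0 < F) (hC : C ∈ Set.Ioo (0:ℝ) 1)
    (f : ℕ → ℕ → ℝ)
    (hnonneg : ∀ k i : ℕ, 0 ≤ f k i)
    (hsum : ∀ k : ℕ, 1 ≤ k → ∑ i ∈ Finset.Icc 1 k, f k i = F)
    (hinc : ∀ k : ℕ, 1 ≤ k → f (k + 1) k = C * f k k)
    (hperm : ∀ k i : ℕ, 1 ≤ i → i < k → f k i ≥ f (k + 1) i)
    (hsybil : ∀ k : ℕ, 1 ≤ k → f k k ≥ f (k + 1) k + f (k + 1) (k + 1)) :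
    (∀ k i : ℕ, 1 ≤ i → i < k → f k i = F * C * (1 - C) ^ (i - 1)) ∧
    (∀ k : ℕ, 1 ≤ k → f k k = F * (1 - C) ^ (k - 1)) :=
  stmt_9_general F C f hsum hinc hperm hsybil
end

section
/- Under the hypotheses ∑_{i=1}^k f_i^k = F, f_i^k ≥ 0, f_i^k ≥ f_i^{k+1} for all i < k, and f_k^k ≥ f_k^{k+1} + f_{k+1}^{k+1} for all k ≥ 1, one can deduce the generalized Sybil-proofness: for all k ≥ 1 and s ≥ 1, f_k^k ≥ f_{k+s}^{k+s} + ∑_{i=0}^{s−1} f_{k+i}^{k+s}. -/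
/-!
Induction on `s`. Passing from `s` to `s + 1`, Sybil-proofness at position `k + s` splits the
diagonal share `f (k+s) (k+s)` into the two shares `f (k+s+1) (k+s)` and `f (k+s+1) (k+s+1)`,
while permanence lets every earlier share `f (k+s) (k+i)`, `i < s`, only shrink when the path grows
to length `k + s + 1`.
-/

open Finset

section SybilProof

variable {f : ℕ → ℕ → ℝ}

lemma sum_range_shares_succ_le (hperm : ∀ k i : ℕ, 1 ≤ i → i < k → f k i ≥ f (k + 1) i)
    {k : ℕ} (hk : 1 ≤ k) (s : ℕ) :
    ∑ i ∈ range s, f (k + s + 1) (k + i) ≤ ∑ i ∈ range s, f (k + s) (k + i) :=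
  sum_le_sum fun i hi => hperm (k + s) (k + i) (by omega) (by simpa using mem_range.mp hi)

lemma diag_ge_diag_add_sum_range (hperm : ∀ k i : ℕ, 1 ≤ i → i < k → f k i ≥ f (k + 1) i)
    (hsybil : ∀ k : ℕ, 1 ≤ k → f k k ≥ f (k + 1) k + f (k + 1) (k + 1))
    {k : ℕ} (hk : 1 ≤ k) (s : ℕ) :
    f (k + s) (k + s) + ∑ i ∈ range s, f (k + s) (k + i) ≤ f k k := by
  induction s with
  | zero => simp
  | succ s ih =>
    have hsplit := hsybil (k + s) (by omega)
    have hshrink := sum_range_shares_succ_le hperm hk s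
    rw [sum_range_succ, ← add_assoc k s 1]
    linarith

end SybilProof

theorem stmt_10_general (f : ℕ → ℕ → ℝ)
    (hperm : ∀ k i : ℕ, 1 ≤ i → i < k → f k i ≥ f (k + 1) i)
    (hsybil : ∀ k : ℕ, 1 ≤ k → f k k ≥ f (k + 1) k + f (k + 1) (k + 1)) :
    ∀ k : ℕ, 1 ≤ k → ∀ s : ℕ, 1 ≤ s →
      f k k ≥ f (k + s) (k + s) + ∑ i ∈ Finset.range s, f (k + s) (k + i) :=
  fun _ hk s _ => diag_ge_diag_add_sum_range hperm hsybil hk s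

theorem stmt_10 (F : ℝ) (hF : 0 < F) (f : ℕ → ℕ → ℝ)
    (hsum : ∀ k : ℕ, 1 ≤ k → ∑ i ∈ Finset.Icc 1 k, f k i = F)
    (hnonneg : ∀ k i : ℕ, 0 ≤ f k i)
    (hperm : ∀ k i : ℕ, 1 ≤ i → i < k → f k i ≥ f (k + 1) i)
    (hsybil : ∀ k : ℕ, 1 ≤ k → f k k ≥ f (k + 1) k + f (k + 1) (k + 1)) :
    ∀ k : ℕ, 1 ≤ k → ∀ s : ℕ, 1 ≤ s →
      f k k ≥ f (k + s) (k + s) + ∑ i ∈ Finset.range s, f (k + s) (k + i) :=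
  stmt_10_general f hperm hsybil
end

section
/- Under the hypotheses ∑_{i=1}^k f_i^k = F, f_i^k ≥ 0, f_i^k ≥ f_i^{k+1} for all i < k (permanence), and f_k^k ≥ f_k^{k+1} + f_{k+1}^{k+1} for all k (single-Sybil-proofness), equality must hold everywhere: f_i^k = f_i^{k+1} for all i < k, and f_k^k = f_k^{k+1} + f_{k+1}^{k+1} for all k. -/
/-!
Permanence and single-Sybil-proofness say that the fee profile of a path of length `k` dominates,
entry by entry, the profile of length `k + 1` with its last two entries merged. Both profiles have
total `F`, so each of these inequalities must be an equality.
-/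

open Finset

theorem eq_merge_of_le_of_sum_eq {M : Type*} [AddCommMonoid M] [PartialOrder M]
    [IsOrderedCancelAddMonoid M] {g h : ℕ → M} {k : ℕ} (hk : 1 ≤ k)
    (hlt : ∀ i ∈ Ico 1 k, g i ≤ h i) (hlast : g k + g (k + 1) ≤ h k)
    (hsum : ∑ i ∈ Icc 1 (k + 1), g i = ∑ i ∈ Icc 1 k, h i) :
    (∀ i ∈ Ico 1 k, g i = h i) ∧ g k + g (k + 1) = h k := by
  have hsplit : (∑ i ∈ Ico 1 k, g i) + (g k + g (k + 1)) = (∑ i ∈ Ico 1 k, h i) + h k := by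
    rw [← add_assoc, ← sum_Ico_succ_top hk, ← sum_Ico_succ_top hk, ← sum_Ico_succ_top (by omega)]
    simpa only [Ico_add_one_right_eq_Icc] using hsum
  obtain ⟨hbody, hmerge⟩ := (add_eq_add_iff_eq_and_eq (sum_le_sum hlt) hlast).mp hsplit
  exact ⟨(sum_eq_sum_iff_of_le hlt).mp hbody, hmerge⟩

theorem stmt_11_general (F : ℝ) (f : ℕ → ℕ → ℝ)
    (hsum : ∀ k : ℕ, 1 ≤ k → ∑ i ∈ Finset.Icc 1 k, f k i = F)
    (hperm : ∀ k i : ℕ, 1 ≤ i → i < k → f k i ≥ f (k + 1) i)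
    (hsybil : ∀ k : ℕ, 1 ≤ k → f k k ≥ f (k + 1) k + f (k + 1) (k + 1)) :
    (∀ k i : ℕ, 1 ≤ i → i < k → f k i = f (k + 1) i) ∧
    (∀ k : ℕ, 1 ≤ k → f k k = f (k + 1) k + f (k + 1) (k + 1)) := by
  have key (k : ℕ) (hk : 1 ≤ k) :=
    eq_merge_of_le_of_sum_eq hk
      (fun i hi => hperm k i (mem_Ico.mp hi).1 (mem_Ico.mp hi).2) (hsybil k hk)
      (by rw [hsum k hk, hsum (k + 1) (by omega)])
  exact ⟨fun k i hi hik => ((key k (by omega)).1 i (mem_Ico.mpr ⟨hi, hik⟩)).symm,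
    fun k hk => (key k hk).2.symm⟩

theorem stmt_11 (F : ℝ) (hF : 0 < F) (f : ℕ → ℕ → ℝ)
    (hsum : ∀ k : ℕ, 1 ≤ k → ∑ i ∈ Finset.Icc 1 k, f k i = F)
    (hnonneg : ∀ k i : ℕ, 0 ≤ f k i)
    (hperm : ∀ k i : ℕ, 1 ≤ i → i < k → f k i ≥ f (k + 1) i)
    (hsybil : ∀ k : ℕ, 1 ≤ k → f k k ≥ f (k + 1) k + f (k + 1) (k + 1)) :
    (∀ k i : ℕ, 1 ≤ i → i < k → f k i = f (k + 1) i) ∧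
    (∀ k : ℕ, 1 ≤ k → f k k = f (k + 1) k + f (k + 1) (k + 1)) :=
  stmt_11_general F f hsum hperm hsybil
end
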